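/- arXiv:0712.1753 — 2 statements merged into one kernel-verified Lean document; each statement's English description precedes it below -/
import Mathlib

section
/- If a quasi-m-ary function f : A^n → B (A finite, n ≥ 1) has at least one inessential variable, then f is essentially m-ary, i.e., ess f = m. -/
/-- Variable `i` is essential in `f`. -/
def EssAt {A B : Type*} {n : ℕ} (f : (Fin n → A) → B) (i : Fin n) : Prop :=
  ∃ a b : Fin n → A, (∀ j, j ≠ i → a j = b j) ∧ f a ≠ f b

/-- The essential arity of `f`: the number of essential variables. -/
noncomputable def essArity {A B : Type*} {n : ℕ} (f : (Fin n → A) → B) : ℕ :=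
  Set.ncard {i : Fin n | EssAt f i}

/-- `A^n_=`: tuples with at least two equal coordinates (all of `A` when `n = 1`). -/
def Aneq (A : Type*) (n : ℕ) : Set (Fin n → A) :=
  {a | n = 1 ∨ ∃ i j : Fin n, i ≠ j ∧ a i = a j}

/-- Variable `i` is essential in the restriction of `f` to `S` (witnesses must lie in `S`). -/
def EssAtOn {A B : Type*} {n : ℕ} (f : (Fin n → A) → B) (S : Set (Fin n → A)) (i : Fin n) : Prop :=
  ∃ a b : Fin n → A, a ∈ S ∧ b ∈ S ∧ (∀ j, j ≠ i → a j = b j) ∧ f a ≠ f b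

/-- Essential arity of the restriction of `f` to `S`. -/
noncomputable def essArityOn {A B : Type*} {n : ℕ} (f : (Fin n → A) → B)
    (S : Set (Fin n → A)) : ℕ :=
  Set.ncard {i : Fin n | EssAtOn f S i}

/-- `g` is a support of `f`: they agree on `A^n_=`. -/
def IsSupport {A B : Type*} {n : ℕ} (f g : (Fin n → A) → B) : Prop :=
  ∀ a ∈ Aneq A n, g a = f a

/-- The quasi-arity of `f`: minimum essential arity of a support of `f`. -/
noncomputable def qarity {A B : Type*} {n : ℕ} (f : (Fin n → A) → B) : ℕ :=
  sInf {m | ∃ g : (Fin n → A) → B, IsSupport f g ∧ essArity g = m}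

/-- The variable identification minor `f_{i ← j}`: substitute `x_j` for `x_i`. -/
def idMinor {A B : Type*} {n : ℕ} (f : (Fin n → A) → B) (i j : Fin n) :
    (Fin n → A) → B :=
  fun a => f (Function.update a i (a j))

/-- The arity gap of `f`: minimum of `ess f - ess f_{i←j}` over pairs of distinct
essential variables. -/
noncomputable def arityGap {A B : Type*} {n : ℕ} (f : (Fin n → A) → B) : ℕ :=
  sInf {d | ∃ i j : Fin n, i ≠ j ∧ EssAt f i ∧ EssAt f j ∧
    d = essArity f - essArity (idMinor f i j)}

/-!
Identifying an inessential variable `x_i` with another variable `x_j` lands in `A^n_=` without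
changing `f`, so every support `g` of `f` satisfies `g (a[i ↦ a j]) = f a`. When `n ≥ 3`, the
index `j` can be chosen apart from any essential variable `x_k` of `f`, and then `x_k` stays
essential in `g`; when `n ≤ 2`, `f` has at most one essential variable, and `g` is
non-constant as soon as `f` is. Either way `ess f ≤ ess g` for every support, so `f` itself
is a support of minimal essential arity.
-/

open Function

section EssentialVariables

variable {A B : Type*} {n : ℕ}

lemma not_essAt_iff {f : (Fin n → A) → B} {i : Fin n} :
    ¬ EssAt f i ↔ ∀ a b : Fin n → A, (∀ j, j ≠ i → a j = b j) → f a = f b := by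
  simp [EssAt]

lemma exists_essAt_of_apply_ne {f : (Fin n → A) → B} {a b : Fin n → A} (hab : f a ≠ f b) :
    ∃ l, EssAt f l := by
  by_contra! hconst
  -- `mix t` switches the first `t` coordinates of `a` to those of `b`.
  let mix : ℕ → Fin n → A := fun t l => if (l : ℕ) < t then b l else a l
  have hstep : ∀ t, f (mix t) = f a := by
    intro t
    induction t with
    | zero => simp [mix]
    | succ t ih =>
      rw [← ih]
      by_cases ht : t < n
      · refine not_essAt_iff.mp (hconst ⟨t, ht⟩) _ _ fun l hl => ?_
        have : (l : ℕ) ≠ t := fun h => hl (Fin.ext h)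
        simp only [mix]
        split_ifs <;> first | rfl | omega
      · congr 1
        funext l
        simp only [mix]
        split_ifs <;> first | rfl | omega
  exact hab ((hstep n).symm.trans (congrArg f (funext fun l => if_pos l.isLt)))

lemma exists_ne_ne_of_three_le (hn : 3 ≤ n) (i k : Fin n) : ∃ j : Fin n, j ≠ i ∧ j ≠ k := by
  by_contra! h
  have h0 := h ⟨0, by omega⟩
  have h1 := h ⟨1, by omega⟩
  have h2 := h ⟨2, by omega⟩
  simp only [ne_eq, Fin.ext_iff] at h0 h1 h2
  omega

end EssentialVariables

namespace IsSupport

variable {A B : Type*} {n : ℕ} {f g : (Fin n → A) → B}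

lemma apply_update_eq (hs : IsSupport f g) {i j : Fin n} (hi : ¬ EssAt f i) (hji : j ≠ i)
    (a : Fin n → A) : g (update a i (a j)) = f a := by
  have hmem : update a i (a j) ∈ Aneq A n :=
    Or.inr ⟨i, j, hji.symm, by simp [hji]⟩
  rw [hs _ hmem]
  exact not_essAt_iff.mp hi _ _ fun l hl => by simp [hl]

lemma essAt_of_essAt (hs : IsSupport f g) {i j k : Fin n} (hi : ¬ EssAt f i) (hji : j ≠ i)
    (hjk : j ≠ k) (hk : EssAt f k) : EssAt g k := by
  obtain ⟨a, b, hab, hfab⟩ := hk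
  refine ⟨update a i (a j), update b i (b j), fun l hl => ?_, ?_⟩
  · rcases eq_or_ne l i with rfl | hli
    · simp [hab j hjk]
    · simp [hli, hab l hl]
  · rwa [hs.apply_update_eq hi hji, hs.apply_update_eq hi hji]

lemma essArity_le (hs : IsSupport f g) {i : Fin n} (hi : ¬ EssAt f i) :
    essArity f ≤ essArity g := by
  by_cases hn : 3 ≤ n
  · refine Set.ncard_le_ncard (fun k hk => ?_) (Set.toFinite _)
    obtain ⟨j, hji, hjk⟩ := exists_ne_ne_of_three_le hn i k
    exact hs.essAt_of_essAt hi hji hjk hk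
  obtain ⟨k, hk⟩ | hf := em (∃ k, EssAt f k)
  · have hki : k ≠ i := fun h => hi (h ▸ hk)
    have hf_le : essArity f ≤ 1 := by
      refine (Set.ncard_le_one).mpr fun k₁ hk₁ k₂ hk₂ => ?_
      have h₁ : k₁ ≠ i := fun h => hi (h ▸ hk₁)
      have h₂ : k₂ ≠ i := fun h => hi (h ▸ hk₂)
      simp only [ne_eq, Fin.ext_iff] at h₁ h₂ ⊢
      omega
    obtain ⟨a, b, -, hfab⟩ := hk
    rw [← hs.apply_update_eq hi hki a, ← hs.apply_update_eq hi hki b] at hfab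
    obtain ⟨l, hl⟩ := exists_essAt_of_apply_ne hfab
    exact hf_le.trans ((Set.ncard_pos).mpr ⟨l, hl⟩)
  · push Not at hf
    simp [essArity, hf]

end IsSupport

lemma qarity_le_essArity {A B : Type*} {n : ℕ} (f : (Fin n → A) → B) :
    qarity f ≤ essArity f :=
  Nat.sInf_le ⟨f, fun _ _ => rfl, rfl⟩

lemma exists_isSupport_essArity_eq_qarity {A B : Type*} {n : ℕ} (f : (Fin n → A) → B) :
    ∃ g, IsSupport f g ∧ essArity g = qarity f :=
  Nat.sInf_mem (s := {m | ∃ g : (Fin n → A) → B, IsSupport f g ∧ essArity g = m})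
    ⟨_, f, fun _ _ => rfl, rfl⟩

theorem stmt4_general {A B : Type*} {n m : ℕ}
    (f : (Fin n → A) → B) (hq : qarity f = m) (hi : ∃ i : Fin n, ¬ EssAt f i) :
    essArity f = m := by
  obtain ⟨i, hi⟩ := hi
  obtain ⟨g, hs, hg⟩ := exists_isSupport_essArity_eq_qarity f
  subst hq
  exact le_antisymm (hg ▸ hs.essArity_le hi) (qarity_le_essArity f)

theorem stmt4 {A B : Type*} [Fintype A] {n m : ℕ} (hn : 0 < n)
    (f : (Fin n → A) → B) (hq : qarity f = m) (hi : ∃ i : Fin n, ¬ EssAt f i) :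
    essArity f = m :=
  stmt4_general f hq hi
end

section
/- (Salomaa's example) Let A be a finite set with |A| = k ≥ 2, let a = (a_1,...,a_k) ∈ A^k have pairwise distinct coordinates, and let b ≠ c be elements of A. Define f : A^k → A by f(x) = b if x = a and f(x) = c otherwise. Then all k variables of f are essential, every variable identification minor of f is constant, and hence the arity gap of f equals k. -/
section EssentialArity

variable {A B : Type*} {n : ℕ} {f : (Fin n → A) → B}

theorem essArity_eq_of_forall_essAt (h : ∀ i, EssAt f i) : essArity f = n := by
  rw [essArity, Set.eq_univ_of_forall (s := {i | EssAt f i}) h, Set.ncard_univ, Nat.card_fin]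

theorem not_essAt_of_forall_eq {d : B} (h : ∀ x, f x = d) (i : Fin n) : ¬ EssAt f i :=
  fun ⟨x, y, _, hxy⟩ => hxy ((h x).trans (h y).symm)

theorem essArity_eq_zero_of_forall_eq {d : B} (h : ∀ x, f x = d) : essArity f = 0 := by
  rw [essArity, Set.eq_empty_of_forall_notMem (s := {i | EssAt f i}) (not_essAt_of_forall_eq h),
    Set.ncard_empty]

theorem arityGap_eq_of_forall_essAt (hn : 2 ≤ n) (hess : ∀ i, EssAt f i) {m : ℕ}
    (hm : ∀ i j, i ≠ j → essArity (idMinor f i j) = m) : arityGap f = n - m := by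
  have hgaps : {d | ∃ i j : Fin n, i ≠ j ∧ EssAt f i ∧ EssAt f j ∧
      d = essArity f - essArity (idMinor f i j)} = {n - m} := by
    ext d
    simp only [Set.mem_ofPred_eq, Set.mem_singleton_iff, essArity_eq_of_forall_essAt hess]
    constructor
    · rintro ⟨i, j, hij, -, -, rfl⟩
      rw [hm i j hij]
    · rintro rfl
      have h01 : (⟨0, by omega⟩ : Fin n) ≠ ⟨1, by omega⟩ := by simp
      exact ⟨_, _, h01, hess _, hess _, by rw [hm _ _ h01]⟩
  rw [arityGap, hgaps, csInf_singleton]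

end EssentialArity

section PointIndicator

variable {A B : Type*} {n : ℕ} {a : Fin n → A}

theorem update_apply_ne_of_injective (ha : Function.Injective a) {i j : Fin n} (hij : i ≠ j)
    (x : Fin n → A) : Function.update x i (x j) ≠ a := by
  intro h
  have hi := congrFun h i
  have hj := congrFun h j
  rw [Function.update_self] at hi
  rw [Function.update_of_ne hij.symm] at hj
  exact ha.ne hij (hi.symm.trans hj)

variable [DecidableEq A] {b c : B}

theorem essAt_ite_eq [Nontrivial A] (hbc : b ≠ c) (i : Fin n) :
    EssAt (fun x => if x = a then b else c) i := by
  obtain ⟨a', ha'⟩ := exists_ne (a i)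
  refine ⟨a, Function.update a i a', fun j hj => (Function.update_of_ne hj _ _).symm, ?_⟩
  have hmoved : Function.update a i a' ≠ a := fun h => ha' (by simpa using congrFun h i)
  simpa [hmoved] using hbc

theorem idMinor_ite_eq_of_injective (ha : Function.Injective a) {i j : Fin n} (hij : i ≠ j)
    (x : Fin n → A) : idMinor (fun x => if x = a then b else c) i j x = c :=
  if_neg (update_apply_ne_of_injective ha hij x)

end PointIndicator

theorem stmt13 {A : Type*} [Fintype A] [DecidableEq A] {k : ℕ} (hk : 2 ≤ k)
    (hcard : Fintype.card A = k) (a : Fin k → A) (ha : Function.Injective a)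
    (b c : A) (hbc : b ≠ c) (f : (Fin k → A) → A)
    (hf : ∀ x : Fin k → A, f x = if x = a then b else c) :
    (∀ i : Fin k, EssAt f i) ∧
    (∀ i j : Fin k, i ≠ j → ∃ d : A, ∀ x, idMinor f i j x = d) ∧
    arityGap f = k := by
  obtain rfl : f = fun x => if x = a then b else c := funext hf
  have : Nontrivial A := Fintype.one_lt_card_iff_nontrivial.mp (by omega)
  have hess := essAt_ite_eq (a := a) hbc
  have hconst := fun i j (hij : i ≠ j) => idMinor_ite_eq_of_injective (b := b) (c := c) ha hij
  refine ⟨hess, fun i j hij => ⟨c, hconst i j hij⟩, ?_⟩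
  rw [arityGap_eq_of_forall_essAt hk hess
    (fun i j hij => essArity_eq_zero_of_forall_eq (hconst i j hij)), Nat.sub_zero]
end
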